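/- arXiv:1304.0063 — 5 statements merged into one kernel-verified Lean document; each statement's English description precedes it below -/
import Mathlib

section
/- D is a finite factorization domain (FFD) if and only if both of the following hold: (i) every nonzero nonunit b ∈ D that cannot be written as b = ξc with ξ ∈ D irreducible and c ∈ D a nonzero nonunit is itself irreducible; and (ii) for every nonzero nonunit a ∈ D, the set of chains from a, where two chains a = a₀, a₁, …, aₙ and a = a₀', a₁', …, aₘ' are identified when n = m and aᵢD = aᵢ'D for all i, is finite. -/
def IsChainFrom (D : Type*) [CommRing D] (a : D) (n : ℕ) (f : ℕ → D) : Prop :=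
  f 0 = a ∧ (∀ i ≤ n, f i ≠ 0 ∧ ¬ IsUnit (f i)) ∧
    ∀ i, 1 ≤ i → i ≤ n → ∃ π : D, Irreducible π ∧ f (i - 1) = π * f i

/-!
If `D` is an FFD, every element `a` has finitely many divisors up to associates (each one is a
sub-product of one of the finitely many factorizations of `a`), and a chain from `a` of length `n`
extends to a factorization of `a` into more than `n` irreducibles; so chains from `a` have bounded
length and take values in a finite set.

Conversely, a chain from `a` of maximal length ends in an element that, by (i), is irreducible,
which factors `a`. A factorization `p₁ ⋯ pₖ` of `a` gives the chain of suffix products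
`pᵢ ⋯ pₖ`, and by cancellation it is recovered from the associate classes of that chain; hence
there are at most as many factorizations as chains.
-/

open Set

section Monoid

variable {M : Type*} [CommMonoidWithZero M]

def irreducibleFactorizations (x : M) : Set (Multiset M) :=
  {s | s.prod = x ∧ ∀ p ∈ s, Irreducible p}

theorem List.not_isUnit_prod_of_irreducible {l : List M} (hl : ∀ p ∈ l, Irreducible p)
    (hne : l ≠ []) : ¬IsUnit l.prod := fun hu =>
  have ⟨p, hp⟩ := l.exists_mem_of_ne_nil hne
  (hl p hp).not_isUnit (List.prod_isUnit_iff.mp hu p hp)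

theorem List.prod_ne_zero_of_irreducible [NoZeroDivisors M] [Nontrivial M] {l : List M}
    (hl : ∀ p ∈ l, Irreducible p) : l.prod ≠ 0 :=
  List.prod_ne_zero fun h0 => (hl 0 h0).ne_zero rfl

theorem irreducible_of_not_exists_irreducible_mul [NoZeroDivisors M] [Nontrivial M] {b : M}
    (hb : ∃ l : List M, l ≠ [] ∧ (∀ p ∈ l, Irreducible p) ∧ b = l.prod)
    (h : ¬∃ ξ c : M, Irreducible ξ ∧ c ≠ 0 ∧ ¬IsUnit c ∧ b = ξ * c) :
    Irreducible b := by
  obtain ⟨l, hne, hl, rfl⟩ := hb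
  rcases l with _ | ⟨p, _ | ⟨q, r⟩⟩
  · exact absurd rfl hne
  · simpa using hl
  · have hqr : ∀ x ∈ q :: r, Irreducible x := fun x hx => hl x (List.mem_cons_of_mem p hx)
    exact absurd ⟨p, (q :: r).prod, hl p List.mem_cons_self,
      List.prod_ne_zero_of_irreducible hqr, List.not_isUnit_prod_of_irreducible hqr (by simp),
      List.prod_cons⟩ h

theorem finite_setOf_dvd
    (hat : ∀ y : M, y ≠ 0 → (irreducibleFactorizations y).Nonempty) {x : M} (hx : x ≠ 0)
    (hfin : (irreducibleFactorizations x).Finite) : {d | d ∣ x}.Finite := by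
  refine (hfin.biUnion fun s _ => s.powerset.finite_toSet.image Multiset.prod).subset ?_
  rintro d ⟨e, rfl⟩
  obtain ⟨s, rfl, hs⟩ := hat _ (left_ne_zero_of_mul hx)
  obtain ⟨t, rfl, ht⟩ := hat _ (right_ne_zero_of_mul hx)
  simp only [mem_iUnion, mem_image, Multiset.mem_powerset]
  refine ⟨s + t, ⟨Multiset.prod_add s t, fun p hp => ?_⟩, s, Multiset.le_add_right s t, rfl⟩
  rcases Multiset.mem_add.mp hp with hp | hp
  exacts [hs p hp, ht p hp]

theorem List.eq_of_forall_prod_drop_eq [IsRightCancelMulZero M] {l l' : List M}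
    (hl : l.prod ≠ 0) (hlen : l.length = l'.length)
    (h : ∀ i < l.length, (l.drop i).prod = (l'.drop i).prod) : l = l' := by
  induction l generalizing l' with
  | nil => exact (List.length_eq_zero_iff.mp hlen.symm).symm
  | cons p l ih =>
    obtain _ | ⟨p', l'⟩ := l'
    · simp at hlen
    have hne : l.prod ≠ 0 := right_ne_zero_of_mul (l.prod_cons ▸ hl)
    have htail : l = l' := ih hne
      (by simpa using hlen) fun i hi => by simpa using h (i + 1) (by simpa using hi)
    subst htail
    have hhead : p * l.prod = p' * l.prod := by simpa using h 0 (by simp)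
    rw [mul_right_cancel₀ hne hhead]

end Monoid

theorem Sigma.mk_fin_succ_inj {α : Type*} {n m : ℕ} {g g' : ℕ → α}
    (h : (⟨n, fun i : Fin (n + 1) => g i⟩ : Σ k : ℕ, Fin (k + 1) → α) =
      ⟨m, fun i : Fin (m + 1) => g' i⟩) : n = m ∧ ∀ i ≤ n, g i = g' i := by
  obtain ⟨rfl, h⟩ := Sigma.mk.inj_iff.mp h
  exact ⟨rfl, fun i hi => congrFun (eq_of_heq h) ⟨i, Nat.lt_succ_of_le hi⟩⟩

namespace Associates

theorem irreducibleFactorizations_nonempty {M : Type*} [CommMonoidWithZero M]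
    (hat : ∀ a : M, a ≠ 0 → ¬IsUnit a →
      ∃ l : List M, l ≠ [] ∧ (∀ p ∈ l, Irreducible p) ∧ a = l.prod)
    {x : Associates M} (hx : x ≠ 0) : (irreducibleFactorizations x).Nonempty := by
  obtain ⟨a, rfl⟩ := mk_surjective x
  by_cases ha : IsUnit a
  · exact ⟨0, by simp [mk_eq_one.mpr ha], by simp⟩
  obtain ⟨l, -, hl, rfl⟩ := hat a (mk_ne_zero.mp hx) ha
  refine ⟨(l : Multiset M).map Associates.mk, by rw [prod_mk, Multiset.prod_coe], ?_⟩
  simp only [Multiset.mem_map, Multiset.mem_coe]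
  rintro _ ⟨p, hp, rfl⟩
  exact irreducible_mk.mpr (hl p hp)

theorem exists_eq_irreducible_mul_of_mk_eq {M : Type*} [CommMonoidWithZero M] {x y : M}
    {p : Associates M} (hp : Irreducible p) (h : Associates.mk x = p * Associates.mk y) :
    ∃ π : M, Irreducible π ∧ x = π * y := by
  obtain ⟨q, rfl⟩ := mk_surjective p
  rw [mk_mul_mk, mk_eq_mk_iff_associated] at h
  obtain ⟨u, hu⟩ := h.symm
  exact ⟨q * u, (irreducible_mul_isUnit u.isUnit).mpr (irreducible_mk.mp hp),
    by rw [← hu, mul_right_comm]⟩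

end Associates

section Chains

variable {D : Type*} [CommRing D] {a : D} {n : ℕ} {f : ℕ → D}

theorem isChainFrom_zero (ha0 : a ≠ 0) (hau : ¬IsUnit a) : IsChainFrom D a 0 fun _ => a :=
  ⟨rfl, fun _ _ => ⟨ha0, hau⟩, fun i h1 h2 => absurd (h1.trans h2) (by simp)⟩

theorem IsChainFrom.mono {m : ℕ} (h : IsChainFrom D a n f) (hmn : m ≤ n) :
    IsChainFrom D a m f :=
  ⟨h.1, fun i hi => h.2.1 i (hi.trans hmn), fun i h1 h2 => h.2.2 i h1 (h2.trans hmn)⟩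

theorem IsChainFrom.exists_list_prod_mul (h : IsChainFrom D a n f) :
    ∃ l : List D, l.length = n ∧ (∀ p ∈ l, Irreducible p) ∧ a = l.prod * f n := by
  induction n with
  | zero => exact ⟨[], rfl, by simp, by simp [h.1]⟩
  | succ n ih =>
    obtain ⟨l, hlen, hl, ha⟩ := ih (h.mono n.le_succ)
    obtain ⟨π, hπ, hstep⟩ := h.2.2 (n + 1) (by omega) le_rfl
    rw [Nat.add_sub_cancel] at hstep
    refine ⟨l ++ [π], by simp [hlen], ?_, ?_⟩
    · simpa [or_imp, forall_and] using ⟨hl, hπ⟩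
    · rw [ha, hstep, List.prod_append, List.prod_singleton, mul_assoc]

theorem IsChainFrom.dvd (h : IsChainFrom D a n f) {i : ℕ} (hi : i ≤ n) : f i ∣ a :=
  have ⟨l, _, _, ha⟩ := (h.mono hi).exists_list_prod_mul
  ⟨l.prod, ha.trans (mul_comm _ _)⟩

theorem IsChainFrom.extend (h : IsChainFrom D a n f) {ξ c : D} (hξ : Irreducible ξ)
    (hc0 : c ≠ 0) (hcu : ¬IsUnit c) (hfn : f n = ξ * c) :
    IsChainFrom D a (n + 1) (Function.update f (n + 1) c) := by
  refine ⟨by simpa using h.1, fun i hi => ?_, fun i h1 hi => ?_⟩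
  · rcases Nat.le_succ_iff.mp hi with hi | rfl
    · simpa [Function.update_of_ne (by omega : i ≠ n + 1)] using h.2.1 i hi
    · simp [hc0, hcu]
  · rcases Nat.le_succ_iff.mp hi with hi | rfl
    · simpa [Function.update_of_ne (by omega : i ≠ n + 1),
        Function.update_of_ne (by omega : i - 1 ≠ n + 1)] using h.2.2 i h1 hi
    · exact ⟨ξ, hξ, by simpa using hfn⟩

theorem IsChainFrom.exists_mem_irreducibleFactorizations_lt_card
    (hat : ∀ x : Associates D, x ≠ 0 → (irreducibleFactorizations x).Nonempty)
    (h : IsChainFrom D a n f) :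
    ∃ s ∈ irreducibleFactorizations (Associates.mk a), n < Multiset.card s := by
  obtain ⟨l, hlen, hl, ha⟩ := h.exists_list_prod_mul
  obtain ⟨hn0, hnu⟩ := h.2.1 n le_rfl
  obtain ⟨t, ht, htirr⟩ := hat _ (Associates.mk_ne_zero.mpr hn0)
  have ht0 : t ≠ 0 := by
    rintro rfl
    exact hnu (Associates.isUnit_mk.mp (ht ▸ isUnit_one))
  refine ⟨(l : Multiset D).map Associates.mk + t, ⟨?_, fun p hp => ?_⟩, ?_⟩
  · rw [Multiset.prod_add, Associates.prod_mk, ht, Multiset.prod_coe, Associates.mk_mul_mk, ha]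
  · rcases Multiset.mem_add.mp hp with hp | hp
    · obtain ⟨q, hq, rfl⟩ := Multiset.mem_map.mp hp
      exact Associates.irreducible_mk.mpr (hl q hq)
    · exact htirr p hp
  · simp [hlen, Multiset.card_pos.mpr ht0]

theorem exists_isChainFrom_of_mk (g : ℕ → Associates D) (h0 : g 0 = Associates.mk a)
    (hg : ∀ i ≤ n, g i ≠ 0 ∧ ¬IsUnit (g i))
    (hstep : ∀ i < n, ∃ p : Associates D, Irreducible p ∧ g i = p * g (i + 1)) :
    ∃ f : ℕ → D, IsChainFrom D a n f ∧ ∀ i, Associates.mk (f i) = g i := by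
  choose r hr using Associates.mk_surjective (M := D)
  let f : ℕ → D := fun i => if i = 0 then a else r (g i)
  have hf : ∀ i, Associates.mk (f i) = g i := by
    intro i
    by_cases hi : i = 0
    · simp [f, hi, h0]
    · simp [f, hi, hr]
  refine ⟨f, ⟨by simp [f], fun i hi => ?_, fun i h1 hi => ?_⟩, hf⟩
  · rw [← Associates.mk_ne_zero, ← Associates.isUnit_mk, hf]
    exact hg i hi
  · obtain ⟨p, hp, hgi⟩ := hstep (i - 1) (by omega)
    rw [← hf, Nat.sub_add_cancel h1, ← hf] at hgi
    exact Associates.exists_eq_irreducible_mul_of_mk_eq hp hgi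

theorem exists_isChainFrom_prod_drop [IsDomain D] {s : Multiset (Associates D)}
    (hs : s ∈ irreducibleFactorizations (Associates.mk a)) (hs0 : s ≠ 0) :
    ∃ f : ℕ → D, IsChainFrom D a (Multiset.card s - 1) f ∧
      ∀ i, Associates.mk (f i) = (s.toList.drop i).prod := by
  have hl : ∀ p ∈ s.toList, Irreducible p := fun p hp => hs.2 p (Multiset.mem_toList.mp hp)
  have hcard : 0 < Multiset.card s := Multiset.card_pos.mpr hs0
  refine exists_isChainFrom_of_mk _ (by simpa using hs.1) (fun i hi => ?_) fun i hi => ?_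
  · have hdrop : ∀ p ∈ s.toList.drop i, Irreducible p :=
      fun p hp => hl p (List.mem_of_mem_drop hp)
    refine ⟨List.prod_ne_zero_of_irreducible hdrop,
      List.not_isUnit_prod_of_irreducible hdrop ?_⟩
    rw [ne_eq, List.drop_eq_nil_iff, Multiset.length_toList]
    omega
  · have hi' : i < s.toList.length := by simp only [Multiset.length_toList]; omega
    exact ⟨_, hl _ (List.getElem_mem hi'),
      by rw [List.drop_eq_getElem_cons hi', List.prod_cons]⟩

end Chains

def chainClasses (D : Type*) [CommRing D] (a : D) :
    Set (Σ n : ℕ, Fin (n + 1) → Associates D) :=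
  {c | ∃ f : ℕ → D, IsChainFrom D a c.1 f ∧
    c.2 = fun i : Fin (c.1 + 1) => Associates.mk (f i)}

section ChainClasses

variable {D : Type*} [CommRing D] {a : D}

theorem finite_chainClasses
    (hat : ∀ x : Associates D, x ≠ 0 → (irreducibleFactorizations x).Nonempty)
    (ha : a ≠ 0) (hfin : (irreducibleFactorizations (Associates.mk a)).Finite) :
    (chainClasses D a).Finite := by
  obtain ⟨N, hN⟩ := (hfin.image Multiset.card).bddAbove
  have hdvd := finite_setOf_dvd hat (Associates.mk_ne_zero.mpr ha) hfin
  refine ((finite_Iic N).biUnion fun n _ =>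
    (Set.Finite.pi fun _ => hdvd).image (Sigma.mk n)).subset ?_
  rintro ⟨n, g⟩ ⟨f, hf, hg⟩
  dsimp only at hf hg
  subst hg
  simp only [mem_iUnion, mem_image, mem_pi, mem_univ, forall_const, mem_Iic]
  obtain ⟨s, hs, hlt⟩ := hf.exists_mem_irreducibleFactorizations_lt_card hat
  refine ⟨n, (hlt.trans_le (hN ⟨s, hs, rfl⟩)).le, _, fun i => ?_, rfl⟩
  exact Associates.mk_dvd_mk.mpr (hf.dvd (Nat.lt_succ_iff.mp i.isLt))

theorem exists_irreducible_list_prod_of_finite_chainClasses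
    (hirr : ∀ b : D, b ≠ 0 → ¬IsUnit b →
      (¬∃ ξ c : D, Irreducible ξ ∧ c ≠ 0 ∧ ¬IsUnit c ∧ b = ξ * c) → Irreducible b)
    (ha0 : a ≠ 0) (hau : ¬IsUnit a) (hfin : (chainClasses D a).Finite) :
    ∃ l : List D, l ≠ [] ∧ (∀ p ∈ l, Irreducible p) ∧ a = l.prod := by
  obtain ⟨⟨N, _⟩, ⟨f, hf, -⟩, hmax⟩ := exists_max_image _ Sigma.fst hfin
    ⟨⟨0, fun _ => Associates.mk a⟩, _, isChainFrom_zero ha0 hau, rfl⟩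
  dsimp only at hf hmax
  obtain ⟨hN0, hNu⟩ := hf.2.1 N le_rfl
  have hfN : Irreducible (f N) := hirr _ hN0 hNu fun ⟨ξ, c, hξ, hc0, hcu, hfN⟩ =>
    absurd (hmax ⟨N + 1, fun i => Associates.mk (Function.update f (N + 1) c i)⟩
      ⟨_, hf.extend hξ hc0 hcu hfN, rfl⟩) (Nat.not_succ_le_self N)
  obtain ⟨l, -, hl, ha⟩ := hf.exists_list_prod_mul
  refine ⟨l ++ [f N], by simp, ?_, by rw [List.prod_append, List.prod_singleton, ha]⟩
  simpa [or_imp, forall_and] using ⟨hl, hfN⟩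

theorem finite_irreducibleFactorizations_of_finite_chainClasses [IsDomain D]
    (hau : ¬IsUnit a) (hfin : (chainClasses D a).Finite) :
    (irreducibleFactorizations (Associates.mk a)).Finite := by
  have hs0 : ∀ s ∈ irreducibleFactorizations (Associates.mk a), s ≠ 0 := by
    rintro s ⟨hs, -⟩ rfl
    exact hau (Associates.isUnit_mk.mp (hs ▸ isUnit_one))
  let chainOf (s : Multiset (Associates D)) : Σ n : ℕ, Fin (n + 1) → Associates D :=
    ⟨Multiset.card s - 1, fun i => (s.toList.drop i).prod⟩
  refine Set.Finite.of_finite_image (f := chainOf) (hfin.subset ?_) fun s hs t ht hst => ?_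
  · rintro _ ⟨s, hs, rfl⟩
    obtain ⟨f, hf, hfg⟩ := exists_isChainFrom_prod_drop hs (hs0 s hs)
    exact ⟨f, hf, funext fun i => (hfg i).symm⟩
  · obtain ⟨hcard, hdrop⟩ := Sigma.mk_fin_succ_inj (g := fun i => (s.toList.drop i).prod)
      (g' := fun i => (t.toList.drop i).prod) hst
    have hs_pos := Multiset.card_pos.mpr (hs0 s hs)
    have ht_pos := Multiset.card_pos.mpr (hs0 t ht)
    rw [← s.coe_toList, ← t.coe_toList]
    refine congrArg _ (List.eq_of_forall_prod_drop_eq ?_ ?_ fun i hi => ?_)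
    · exact List.prod_ne_zero_of_irreducible fun p hp => hs.2 p (Multiset.mem_toList.mp hp)
    · simp only [Multiset.length_toList]
      omega
    · exact hdrop i (by simp only [Multiset.length_toList] at hi; omega)

end ChainClasses

/-- `D` is a finite factorization domain (atomic and each nonzero nonunit has only
finitely many factorizations into irreducibles up to order and associates, encoded as
multisets of associate classes of irreducibles with the given product) iff
(i) every nonzero nonunit `b` which cannot be written `b = ξ * c` with `ξ` irreducible
and `c` a nonzero nonunit is itself irreducible, and (ii) for every nonzero nonunit `a`
the set of chains from `a`, identified when they have the same length and corresponding
terms generate the same principal ideals (i.e. are associated), is finite. -/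
theorem ffd_iff_finitely_many_paths (D : Type*) [CommRing D] [IsDomain D] :
    ((∀ a : D, a ≠ 0 → ¬ IsUnit a →
        ∃ l : List D, l ≠ [] ∧ (∀ p ∈ l, Irreducible p) ∧ a = l.prod) ∧
      (∀ a : D, a ≠ 0 → ¬ IsUnit a →
        {s : Multiset (Associates D) |
          s.prod = Associates.mk a ∧ ∀ p ∈ s, Irreducible p}.Finite)) ↔
      ((∀ b : D, b ≠ 0 → ¬ IsUnit b →
          (¬ ∃ ξ c : D, Irreducible ξ ∧ c ≠ 0 ∧ ¬ IsUnit c ∧ b = ξ * c) →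
          Irreducible b) ∧
        (∀ a : D, a ≠ 0 → ¬ IsUnit a →
          {c : Σ n : ℕ, Fin (n + 1) → Associates D |
            ∃ f : ℕ → D, IsChainFrom D a c.1 f ∧
              c.2 = fun i : Fin (c.1 + 1) => Associates.mk (f i)}.Finite)) := by
  constructor
  · rintro ⟨hat, hfin⟩
    have hat' (x : Associates D) (hx : x ≠ 0) :=
      Associates.irreducibleFactorizations_nonempty hat hx
    exact ⟨fun b hb0 hbu => irreducible_of_not_exists_irreducible_mul (hat b hb0 hbu),
      fun a ha0 hau => finite_chainClasses hat' ha0 (hfin a ha0 hau)⟩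
  · rintro ⟨hirr, hfin⟩
    exact ⟨fun a ha0 hau => exists_irreducible_list_prod_of_finite_chainClasses hirr ha0 hau
        (hfin a ha0 hau),
      fun a ha0 hau => finite_irreducibleFactorizations_of_finite_chainClasses hau
        (hfin a ha0 hau)⟩
end

section
/- D is a half-factorial domain (HFD) if and only if for every nonzero nonunit a ∈ D the following hold: (i) there is no infinite sequence a = a₀, a₁, a₂, … of nonzero nonunits of D with each quotient aᵢ/aᵢ₊₁ ∈ D irreducible; (ii) every maximal chain from a ends at an irreducible element of D; and (iii) any two maximal chains from a have the same length. -/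
/-- A chain from `a` is maximal if its last term cannot be further factored: there is no
nonzero nonunit `c` with `f n / c` in `D` irreducible, i.e. `f n = π * c`. -/
def IsMaximalChainFrom (D : Type*) [CommRing D] (a : D) (n : ℕ) (f : ℕ → D) : Prop :=
  IsChainFrom D a n f ∧
    ¬ ∃ c : D, c ≠ 0 ∧ ¬ IsUnit c ∧ ∃ π : D, Irreducible π ∧ f n = π * c

theorem exists_terminal_chain_of_not_exists_infinite_chain {α : Type*} {r : α → α → Prop}
    {a : α} (h : ¬∃ g : ℕ → α, g 0 = a ∧ ∀ i, r (g i) (g (i + 1))) :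
    ∃ (n : ℕ) (g : ℕ → α), g 0 = a ∧ (∀ i < n, r (g i) (g (i + 1))) ∧ ¬∃ b, r (g n) b := by
  have hacc : Acc (flip r) a := by
    by_contra hna
    exact h (not_acc_iff_exists_descending_chain.1 hna)
  induction hacc with
  | intro x _ ih =>
    by_cases hx : ∃ y, r x y
    · obtain ⟨y, hxy⟩ := hx
      have hy : ¬∃ g : ℕ → α, g 0 = y ∧ ∀ i, r (g i) (g (i + 1)) := by
        rintro ⟨g, rfl, hg⟩
        exact h ⟨fun | 0 => x | i + 1 => g i, rfl, fun | 0 => hxy | i + 1 => hg i⟩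
      obtain ⟨n, g, rfl, hsteps, hterm⟩ := ih y hxy hy
      refine ⟨n + 1, fun | 0 => x | i + 1 => g i, rfl, ?_, hterm⟩
      rintro (_ | i) hi
      · exact hxy
      · exact hsteps i (by omega)
    · exact ⟨0, fun _ => x, rfl, by simp, hx⟩

theorem exists_irreducible_list_of_steps {M : Type*} [CommMonoid M] {f : ℕ → M} {n : ℕ}
    (h : ∀ i < n, ∃ π, Irreducible π ∧ f i = π * f (i + 1)) :
    ∃ l : List M, l.length = n ∧ (∀ p ∈ l, Irreducible p) ∧ f 0 = l.prod * f n := by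
  induction n with
  | zero => exact ⟨[], rfl, by simp, by simp⟩
  | succ n ih =>
    obtain ⟨l, hlen, hirr, hprod⟩ := ih fun i hi => h i (by omega)
    obtain ⟨π, hπ, hstep⟩ := h n (by omega)
    refine ⟨π :: l, by simp [hlen], List.forall_mem_cons.2 ⟨hπ, hirr⟩, ?_⟩
    rw [hprod, hstep, List.prod_cons, mul_assoc, mul_left_comm]

theorem List.prod_isUnit_iff_eq_nil {M : Type*} [CommMonoid M] {l : List M}
    (hl : ∀ p ∈ l, Irreducible p) : IsUnit l.prod ↔ l = [] := by
  rw [List.prod_isUnit_iff]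
  refine ⟨fun hu => List.eq_nil_iff_forall_not_mem.2 fun p hp => (hl p hp).not_isUnit (hu p hp),
    ?_⟩
  rintro rfl
  simp

theorem List.prod_ne_zero_of_forall_irreducible {M₀ : Type*} [CommMonoidWithZero M₀]
    [NoZeroDivisors M₀] [Nontrivial M₀] {l : List M₀} (hl : ∀ p ∈ l, Irreducible p) :
    l.prod ≠ 0 :=
  List.prod_ne_zero fun h0 => (hl 0 h0).ne_zero rfl

theorem not_exists_infinite_chain_of_halfFactorial {M : Type*} [CommMonoidWithZero M]
    (hatomic : ∀ a : M, a ≠ 0 → ¬IsUnit a →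
      ∃ l : List M, l ≠ [] ∧ (∀ p ∈ l, Irreducible p) ∧ a = l.prod)
    (hhalf : ∀ l₁ l₂ : List M, (∀ p ∈ l₁, Irreducible p) → (∀ p ∈ l₂, Irreducible p) →
      l₁.prod = l₂.prod → l₁.length = l₂.length) :
    ¬∃ g : ℕ → M, (∀ i, g i ≠ 0 ∧ ¬IsUnit (g i)) ∧
      ∀ i, ∃ π : M, Irreducible π ∧ g i = π * g (i + 1) := by
  rintro ⟨g, hnz, hsteps⟩
  obtain ⟨l₀, -, hl₀, hprod₀⟩ := hatomic (g 0) (hnz 0).1 (hnz 0).2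
  obtain ⟨l, hlen, hl, hprod⟩ :=
    exists_irreducible_list_of_steps (n := l₀.length + 1) fun i _ => hsteps i
  obtain ⟨m, hm, hmirr, hmprod⟩ := hatomic _ (hnz _).1 (hnz _).2
  have hlen_eq := hhalf l₀ (l ++ m) hl₀ (List.forall_mem_append.2 ⟨hl, hmirr⟩)
    (by rw [← hprod₀, List.prod_append, ← hmprod, ← hprod])
  rw [List.length_append, hlen] at hlen_eq
  have := List.length_pos_iff.2 hm
  omega

section Chains

variable {D : Type*} [CommRing D]

/-- The second clause of `IsMaximalChainFrom D a n f` is, by definition,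
`¬∃ c, IsChainStep (f n) c`. -/
def IsChainStep (x y : D) : Prop :=
  y ≠ 0 ∧ ¬IsUnit y ∧ ∃ π : D, Irreducible π ∧ x = π * y

theorem isChainFrom_iff {a : D} {n : ℕ} {f : ℕ → D} :
    IsChainFrom D a n f ↔
      f 0 = a ∧ a ≠ 0 ∧ ¬IsUnit a ∧ ∀ i < n, IsChainStep (f i) (f (i + 1)) := by
  constructor
  · rintro ⟨h0, hnz, hsteps⟩
    refine ⟨h0, h0 ▸ (hnz 0 (Nat.zero_le n)).1, h0 ▸ (hnz 0 (Nat.zero_le n)).2, fun i hi => ?_⟩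
    exact ⟨(hnz (i + 1) hi).1, (hnz (i + 1) hi).2, hsteps (i + 1) (by omega) hi⟩
  · rintro ⟨h0, ha, hau, hsteps⟩
    refine ⟨h0, ?_, ?_⟩
    · rintro (_ | i) hi
      · exact h0 ▸ ⟨ha, hau⟩
      · exact ⟨(hsteps i hi).1, (hsteps i hi).2.1⟩
    · rintro (_ | i) h1 hi
      · omega
      · exact (hsteps i hi).2.2

theorem IsChainFrom.exists_irreducible_list {a : D} {n : ℕ} {f : ℕ → D}
    (hf : IsChainFrom D a n f) :
    ∃ l : List D, l.length = n ∧ (∀ p ∈ l, Irreducible p) ∧ a = l.prod * f n := by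
  obtain ⟨h0, -, -, hsteps⟩ := isChainFrom_iff.1 hf
  exact h0 ▸ exists_irreducible_list_of_steps fun i hi => (hsteps i hi).2.2

theorem Irreducible.not_exists_isChainStep {x : D} (hx : Irreducible x) :
    ¬∃ c, IsChainStep x c := by
  rintro ⟨c, -, hc, π, hπ, rfl⟩
  exact (hx.isUnit_or_isUnit rfl).elim hπ.not_isUnit hc

theorem irreducible_of_not_exists_isChainStep [IsDomain D] {l : List D} (hl : l ≠ [])
    (hirr : ∀ p ∈ l, Irreducible p) (hterm : ¬∃ c, IsChainStep l.prod c) :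
    Irreducible l.prod := by
  match l, hl with
  | [p], _ => simpa using hirr
  | p :: q :: s, _ =>
    have htail : ∀ r ∈ q :: s, Irreducible r := fun r hr => hirr r (List.mem_cons_of_mem p hr)
    have hnonunit : ¬IsUnit (q :: s).prod :=
      (List.prod_isUnit_iff_eq_nil htail).not.2 (List.cons_ne_nil q s)
    exact absurd ⟨(q :: s).prod, List.prod_ne_zero_of_forall_irreducible htail, hnonunit,
      p, hirr p List.mem_cons_self, List.prod_cons⟩ hterm

theorem isMaximalChainFrom_prod_drop [IsDomain D] {l : List D} (hl : l ≠ [])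
    (hirr : ∀ p ∈ l, Irreducible p) :
    IsMaximalChainFrom D l.prod (l.length - 1) fun i => (l.drop i).prod := by
  have hdrop : ∀ i, ∀ p ∈ l.drop i, Irreducible p :=
    fun i p hp => hirr p (List.mem_of_mem_drop hp)
  refine ⟨isChainFrom_iff.2 ⟨by simp, List.prod_ne_zero_of_forall_irreducible hirr,
    by simpa [List.prod_isUnit_iff_eq_nil hirr] using hl, fun i hi => ?_⟩, ?_⟩
  · refine ⟨List.prod_ne_zero_of_forall_irreducible (hdrop _), ?_, l[i], hirr _ (by simp), ?_⟩
    · rw [List.prod_isUnit_iff_eq_nil (hdrop _), List.drop_eq_nil_iff]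
      omega
    · rw [List.drop_eq_getElem_cons (by omega), List.prod_cons]
  · show ¬∃ c, IsChainStep (l.drop (l.length - 1)).prod c
    rw [List.drop_length_sub_one hl, List.prod_singleton]
    exact (hirr _ (List.getLast_mem hl)).not_exists_isChainStep

theorem irreducible_of_isMaximalChainFrom [IsDomain D]
    (hatomic : ∀ a : D, a ≠ 0 → ¬IsUnit a →
      ∃ l : List D, l ≠ [] ∧ (∀ p ∈ l, Irreducible p) ∧ a = l.prod)
    {a : D} {n : ℕ} {f : ℕ → D} (hf : IsMaximalChainFrom D a n f) : Irreducible (f n) := by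
  obtain ⟨-, hnz, -⟩ := hf.1
  obtain ⟨l, hl, hirr, hfn⟩ := hatomic (f n) (hnz n le_rfl).1 (hnz n le_rfl).2
  have hterm : ¬∃ c, IsChainStep (f n) c := hf.2
  rw [hfn] at hterm ⊢
  exact irreducible_of_not_exists_isChainStep hl hirr hterm

theorem IsMaximalChainFrom.length_eq_of_halfFactorial [IsDomain D]
    (hatomic : ∀ a : D, a ≠ 0 → ¬IsUnit a →
      ∃ l : List D, l ≠ [] ∧ (∀ p ∈ l, Irreducible p) ∧ a = l.prod)
    (hhalf : ∀ l₁ l₂ : List D, (∀ p ∈ l₁, Irreducible p) → (∀ p ∈ l₂, Irreducible p) →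
      l₁.prod = l₂.prod → l₁.length = l₂.length)
    {a : D} {n m : ℕ} {f g : ℕ → D} (hf : IsMaximalChainFrom D a n f)
    (hg : IsMaximalChainFrom D a m g) : n = m := by
  obtain ⟨lf, rfl, hlf, hf_eq⟩ := hf.1.exists_irreducible_list
  obtain ⟨lg, rfl, hlg, hg_eq⟩ := hg.1.exists_irreducible_list
  have hlen_eq := hhalf (f lf.length :: lf) (g lg.length :: lg)
    (List.forall_mem_cons.2 ⟨irreducible_of_isMaximalChainFrom hatomic hf, hlf⟩)
    (List.forall_mem_cons.2 ⟨irreducible_of_isMaximalChainFrom hatomic hg, hlg⟩)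
    (by rw [List.prod_cons, List.prod_cons, mul_comm, ← hf_eq, mul_comm, ← hg_eq])
  simpa using hlen_eq

theorem exists_isMaximalChainFrom {a : D} (ha : a ≠ 0) (hau : ¬IsUnit a)
    (hinf : ¬∃ g : ℕ → D, g 0 = a ∧ (∀ i, g i ≠ 0 ∧ ¬IsUnit (g i)) ∧
      ∀ i, ∃ π : D, Irreducible π ∧ g i = π * g (i + 1)) :
    ∃ (n : ℕ) (f : ℕ → D), IsMaximalChainFrom D a n f := by
  have hfinite : ¬∃ g : ℕ → D, g 0 = a ∧ ∀ i, IsChainStep (g i) (g (i + 1)) := by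
    rintro ⟨g, hg0, hg⟩
    refine hinf ⟨g, hg0, ?_, fun i => (hg i).2.2⟩
    rintro (_ | i)
    · exact hg0 ▸ ⟨ha, hau⟩
    · exact ⟨(hg i).1, (hg i).2.1⟩
  obtain ⟨n, f, h0, hsteps, hterm⟩ := exists_terminal_chain_of_not_exists_infinite_chain hfinite
  exact ⟨n, f, isChainFrom_iff.2 ⟨h0, ha, hau, hsteps⟩, hterm⟩

theorem length_eq_of_isMaximalChainFrom_length_eq [IsDomain D]
    (hchains : ∀ a : D, a ≠ 0 → ¬IsUnit a → ∀ (n : ℕ) (f : ℕ → D) (m : ℕ) (g : ℕ → D),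
      IsMaximalChainFrom D a n f → IsMaximalChainFrom D a m g → n = m)
    {l₁ l₂ : List D} (h₁ : ∀ p ∈ l₁, Irreducible p) (h₂ : ∀ p ∈ l₂, Irreducible p)
    (hprod : l₁.prod = l₂.prod) : l₁.length = l₂.length := by
  have hnil : l₁ = [] ↔ l₂ = [] := by
    rw [← List.prod_isUnit_iff_eq_nil h₁, ← List.prod_isUnit_iff_eq_nil h₂, hprod]
  rcases eq_or_ne l₁ [] with rfl | hl₁
  · rw [hnil.1 rfl]
  have hl₂ := hnil.not.1 hl₁
  have hlen_eq := hchains l₁.prod (List.prod_ne_zero_of_forall_irreducible h₁)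
    ((List.prod_isUnit_iff_eq_nil h₁).not.2 hl₁) _ _ _ _ (isMaximalChainFrom_prod_drop hl₁ h₁)
    (hprod ▸ isMaximalChainFrom_prod_drop hl₂ h₂)
  have := List.length_pos_iff.2 hl₁
  have := List.length_pos_iff.2 hl₂
  omega

end Chains

/-- `D` is a half-factorial domain (atomic and all factorizations of a given element
into irreducibles have the same length) iff for every nonzero nonunit `a` : (i) there is
no infinite chain starting at `a`; (ii) every maximal chain from `a` ends at an
irreducible; (iii) any two maximal chains from `a` have the same length. -/
theorem hfd_iff_paths_same_length (D : Type*) [CommRing D] [IsDomain D] :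
    ((∀ a : D, a ≠ 0 → ¬ IsUnit a →
        ∃ l : List D, l ≠ [] ∧ (∀ p ∈ l, Irreducible p) ∧ a = l.prod) ∧
      (∀ l₁ l₂ : List D, (∀ p ∈ l₁, Irreducible p) → (∀ p ∈ l₂, Irreducible p) →
        l₁.prod = l₂.prod → l₁.length = l₂.length)) ↔
      (∀ a : D, a ≠ 0 → ¬ IsUnit a →
        (¬ ∃ g : ℕ → D, g 0 = a ∧ (∀ i, g i ≠ 0 ∧ ¬ IsUnit (g i)) ∧
            ∀ i, ∃ π : D, Irreducible π ∧ g i = π * g (i + 1)) ∧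
        (∀ (n : ℕ) (f : ℕ → D), IsMaximalChainFrom D a n f → Irreducible (f n)) ∧
        (∀ (n : ℕ) (f : ℕ → D) (m : ℕ) (g : ℕ → D),
          IsMaximalChainFrom D a n f → IsMaximalChainFrom D a m g → n = m)) := by
  constructor
  · rintro ⟨hatomic, hhalf⟩ a - -
    exact ⟨fun ⟨g, _, hg⟩ => not_exists_infinite_chain_of_halfFactorial hatomic hhalf ⟨g, hg⟩,
      fun _ _ => irreducible_of_isMaximalChainFrom hatomic,
      fun _ _ _ _ hf hg => hf.length_eq_of_halfFactorial hatomic hhalf hg⟩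
  · intro h
    have hatomic : ∀ a : D, a ≠ 0 → ¬IsUnit a →
        ∃ l : List D, l ≠ [] ∧ (∀ p ∈ l, Irreducible p) ∧ a = l.prod := by
      intro a ha hau
      obtain ⟨hinf, hirr, -⟩ := h a ha hau
      obtain ⟨n, f, hf⟩ := exists_isMaximalChainFrom ha hau hinf
      obtain ⟨l, -, hl, hprod⟩ := hf.1.exists_irreducible_list
      exact ⟨f n :: l, List.cons_ne_nil _ _, List.forall_mem_cons.2 ⟨hirr n f hf, hl⟩,
        by rw [List.prod_cons, hprod, mul_comm]⟩
    exact ⟨hatomic, fun _ _ => length_eq_of_isMaximalChainFrom_length_eq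
      fun a ha hau => (h a ha hau).2.2⟩
end

section
/- Let D = ℤ + Xℚ[X]. A nonzero nonunit a ∈ D can be written as a finite product of irreducible elements of D if and only if ord(a) = 0, i.e., if and only if the constant coefficient of a is nonzero. -/
/-! The constant coefficient is a ring homomorphism `D → ℤ`, so units of `D` have constant
coefficient `±1`. Hence an element `f` with `f(0) = 0` is never irreducible: `f = 2 · (f / 2)`
splits it into two nonunits; so a product of irreducibles has nonzero constant coefficient.
Conversely, `|f(0)| · 2 ^ deg f` is multiplicative on `D`, equals `1` only at units and is nonzero
when `f(0) ≠ 0`, so splitting off nonunits must stop after finitely many steps. -/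

open Polynomial

/-- `D = ℤ + Xℚ[X]` : the subring of `ℚ[X]` of polynomials with integer constant
coefficient. -/
noncomputable def ZplusXQX : Subring (Polynomial ℚ) where
  carrier := {f | ∃ n : ℤ, f.coeff 0 = (n : ℚ)}
  zero_mem' := ⟨0, by simp⟩
  one_mem' := ⟨1, by simp⟩
  add_mem' := by
    rintro f g ⟨m, hm⟩ ⟨n, hn⟩
    exact ⟨m + n, by simp [hm, hn]⟩
  mul_mem' := by
    rintro f g ⟨m, hm⟩ ⟨n, hn⟩
    exact ⟨m * n, by simp [Polynomial.mul_coeff_zero, hm, hn]⟩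
  neg_mem' := by
    rintro f ⟨m, hm⟩
    exact ⟨-m, by simp [hm]⟩

theorem exists_irreducible_factors_of_monoidHom_nat {M : Type*} [Monoid M] (μ : M →* ℕ)
    (hμ : ∀ x, μ x = 1 → IsUnit x) {a : M} (ha : μ a ≠ 0) (hu : ¬IsUnit a) :
    ∃ l : List M, l ≠ [] ∧ (∀ p ∈ l, Irreducible p) ∧ a = l.prod := by
  induction hn : μ a using Nat.strong_induction_on generalizing a with
  | _ n ih =>
  by_cases hirr : Irreducible a
  · exact ⟨[a], by simp, by simpa, by simp⟩
  obtain ⟨b, c, rfl, hb, hc⟩ : ∃ b c, a = b * c ∧ ¬IsUnit b ∧ ¬IsUnit c := by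
    simpa [irreducible_iff, hu] using hirr
  obtain ⟨hb0, hc0⟩ : μ b ≠ 0 ∧ μ c ≠ 0 := by simpa using ha
  have two_le : ∀ x, μ x ≠ 0 → ¬IsUnit x → 2 ≤ μ x := fun x h0 hx =>
    by have := mt (hμ x) hx; omega
  have hbn : μ b < n := by
    rw [← hn, map_mul]; nlinarith [two_le c hc0 hc, Nat.pos_of_ne_zero hb0]
  have hcn : μ c < n := by
    rw [← hn, map_mul]; nlinarith [two_le b hb0 hb, Nat.pos_of_ne_zero hc0]
  obtain ⟨lb, hlb, hlb_irr, rfl⟩ := ih _ hbn hb0 hb rfl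
  obtain ⟨lc, -, hlc_irr, rfl⟩ := ih _ hcn hc0 hc rfl
  refine ⟨lb ++ lc, by simp [hlb], ?_, List.prod_append.symm⟩
  simpa [or_imp, forall_and] using And.intro hlb_irr hlc_irr

namespace ZplusXQX

theorem exists_intCast_eq_coeff_zero (a : ZplusXQX) : ∃ n : ℤ, (a : ℚ[X]).coeff 0 = n := a.2

noncomputable def intCoeffZero (a : ZplusXQX) : ℤ := (exists_intCast_eq_coeff_zero a).choose

theorem intCast_intCoeffZero (a : ZplusXQX) : (intCoeffZero a : ℚ) = (a : ℚ[X]).coeff 0 :=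
  (exists_intCast_eq_coeff_zero a).choose_spec.symm

noncomputable def constCoeff : ZplusXQX →+* ℤ where
  toFun := intCoeffZero
  map_one' := Int.cast_injective (α := ℚ) <| by simp [intCast_intCoeffZero]
  map_mul' a b := Int.cast_injective (α := ℚ) <| by simp [intCast_intCoeffZero, mul_coeff_zero]
  map_zero' := Int.cast_injective (α := ℚ) <| by simp [intCast_intCoeffZero]
  map_add' a b := Int.cast_injective (α := ℚ) <| by simp [intCast_intCoeffZero]

theorem intCast_constCoeff (a : ZplusXQX) : (constCoeff a : ℚ) = (a : ℚ[X]).coeff 0 :=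
  intCast_intCoeffZero a

theorem constCoeff_eq_zero_iff {a : ZplusXQX} : constCoeff a = 0 ↔ (a : ℚ[X]).coeff 0 = 0 := by
  rw [← intCast_constCoeff, Int.cast_eq_zero]

theorem constCoeff_ne_zero_of_irreducible {p : ZplusXQX} (hp : Irreducible p) :
    constCoeff p ≠ 0 := by
  intro h0
  have hp0 : (p : ℚ[X]).coeff 0 = 0 := constCoeff_eq_zero_iff.mp h0
  let q : ZplusXQX := ⟨C (1 / 2 : ℚ) * p, 0, by simp [hp0]⟩
  have hpq : p = 2 * q := Subtype.ext <| by
    simp only [Subring.coe_mul, q, ← mul_assoc]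
    rw [show ((2 : ZplusXQX) : ℚ[X]) = C 2 from rfl, ← C_mul]
    norm_num
  have hq0 : constCoeff q = 0 := constCoeff_eq_zero_iff.mpr (by simp [q, hp0])
  rcases hp.isUnit_or_isUnit hpq with h | h
  · have := h.map constCoeff
    rw [map_ofNat, Int.isUnit_iff] at this
    omega
  · simpa [hq0] using h.map constCoeff

theorem coe_ne_zero_of_constCoeff_ne_zero {a : ZplusXQX} (h : constCoeff a ≠ 0) :
    (a : ℚ[X]) ≠ 0 := fun ha => h (constCoeff_eq_zero_iff.mpr (by simp [ha]))

noncomputable def size : ZplusXQX →* ℕ where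
  toFun a := (constCoeff a).natAbs * 2 ^ (a : ℚ[X]).natDegree
  map_one' := by simp
  map_mul' a b := by
    rcases eq_or_ne (constCoeff a * constCoeff b) 0 with h | h
    · rcases mul_eq_zero.mp h with h | h <;> simp [h]
    · obtain ⟨ha, hb⟩ := mul_ne_zero_iff.mp h
      rw [map_mul, Int.natAbs_mul, Subring.coe_mul,
        natDegree_mul (coe_ne_zero_of_constCoeff_ne_zero ha) (coe_ne_zero_of_constCoeff_ne_zero hb),
        pow_add]
      ring

theorem size_ne_zero_iff {a : ZplusXQX} : size a ≠ 0 ↔ constCoeff a ≠ 0 := by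
  simp [size]

theorem isUnit_of_size_eq_one {a : ZplusXQX} (h : size a = 1) : IsUnit a := by
  obtain ⟨habs, hdeg⟩ := mul_eq_one.mp h
  have hdeg : (a : ℚ[X]).natDegree = 0 := by simpa using hdeg
  have hsq : constCoeff a * constCoeff a = 1 := by rw [← Int.natAbs_mul_self, habs]; rfl
  refine IsUnit.of_mul_eq_one a (Subtype.ext ?_)
  rw [Subring.coe_mul, eq_C_of_natDegree_eq_zero hdeg, ← C_mul, ← intCast_constCoeff,
    ← Int.cast_mul, hsq]
  rfl

end ZplusXQX

/-- In `D = ℤ + Xℚ[X]`, a nonzero nonunit `a` is a finite product of irreducible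
elements of `D` iff `ord a = 0`, i.e. iff the constant coefficient of `a` is nonzero. -/
theorem ZplusXQX_atomic_iff_ord_zero (a : ZplusXQX) (ha : a ≠ 0) (hu : ¬ IsUnit a) :
    ((∃ l : List ZplusXQX, l ≠ [] ∧ (∀ p ∈ l, Irreducible p) ∧ a = l.prod) ↔
        (a : Polynomial ℚ).natTrailingDegree = 0) ∧
      ((a : Polynomial ℚ).natTrailingDegree = 0 ↔ (a : Polynomial ℚ).coeff 0 ≠ 0) := by
  have hord : (a : ℚ[X]).natTrailingDegree = 0 ↔ (a : ℚ[X]).coeff 0 ≠ 0 := by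
    simp [natTrailingDegree_eq_zero, ha]
  refine ⟨?_, hord⟩
  rw [hord, ← ZplusXQX.intCast_constCoeff, Int.cast_ne_zero]
  constructor
  · rintro ⟨l, -, hl, rfl⟩
    rw [map_list_prod]
    exact List.prod_ne_zero (by
      simpa using fun p hp => ZplusXQX.constCoeff_ne_zero_of_irreducible (hl p hp))
  · intro h
    exact exists_irreducible_factors_of_monoidHom_nat ZplusXQX.size
      (fun _ => ZplusXQX.isUnit_of_size_eq_one) (ZplusXQX.size_ne_zero_iff.mpr h) hu
end

section
/- The domain D = ℤ + Xℚ[X] is not quasi atomic; in fact, for the element X ∈ D there is no b ∈ D such that X·b is a finite product of irreducible elements of D. -/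
open Polynomial

/- Every element `p` of `D` with zero constant coefficient factors as `2 * (p / 2)` into two
nonunits, because `2` is not invertible in `ℤ`, the ring of constant coefficients. So
irreducible elements have nonzero constant coefficient, hence so does any product of them,
whereas `X * b` has constant coefficient `0`. -/

namespace ZplusXQX

noncomputable def constantCoeff : ZplusXQX →+* ℚ :=
  Polynomial.constantCoeff.comp ZplusXQX.subtype

lemma constantCoeff_apply (p : ZplusXQX) : constantCoeff p = (p : ℚ[X]).coeff 0 := rfl

lemma not_isUnit_two : ¬ IsUnit (2 : ZplusXQX) := by
  intro h
  obtain ⟨b, hb⟩ := h.exists_right_inv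
  obtain ⟨n, hn⟩ := b.2
  have hcoeff : 2 * (n : ℚ) = 1 := by
    simpa only [map_mul, map_ofNat, map_one, constantCoeff_apply, hn]
      using congrArg constantCoeff hb
  have : 2 * n = 1 := by exact_mod_cast hcoeff
  omega

lemma not_isUnit_of_constantCoeff_eq_zero {p : ZplusXQX} (hp : constantCoeff p = 0) :
    ¬ IsUnit p := fun h => by
  simpa [hp] using h.map constantCoeff

lemma constantCoeff_ne_zero_of_irreducible {p : ZplusXQX} (hp : Irreducible p) :
    constantCoeff p ≠ 0 := by
  intro hp0
  let q : ZplusXQX := ⟨C (1 / 2 : ℚ) * p, 0, by simpa [constantCoeff_apply] using hp0⟩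
  have hpq : p = 2 * q := by
    ext1
    simp only [q, Subring.coe_mul, ← mul_assoc]
    rw [show ((2 : ZplusXQX) : ℚ[X]) = C 2 from rfl, ← C_mul]
    norm_num
  refine (hp.isUnit_or_isUnit hpq).elim not_isUnit_two (not_isUnit_of_constantCoeff_eq_zero ?_)
  simpa [q, constantCoeff_apply] using hp0

lemma constantCoeff_prod_ne_zero {l : List ZplusXQX} (hl : ∀ p ∈ l, Irreducible p) :
    constantCoeff l.prod ≠ 0 := by
  rw [map_list_prod]
  exact List.prod_ne_zero fun h0 =>
    let ⟨p, hp, hp0⟩ := List.mem_map.mp h0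
    constantCoeff_ne_zero_of_irreducible (hl p hp) hp0

end ZplusXQX

/-- `D = ℤ + Xℚ[X]` is not quasi atomic; in fact for the element `X ∈ D` there is no
`b ∈ D` such that `X * b` is a finite product of irreducible elements of `D`. -/
theorem ZplusXQX_not_quasiAtomic :
    (¬ ∀ a : ZplusXQX, a ≠ 0 → ¬ IsUnit a → ∃ b : ZplusXQX,
        ∃ l : List ZplusXQX, l ≠ [] ∧ (∀ p ∈ l, Irreducible p) ∧ a * b = l.prod) ∧
      ¬ ∃ b : ZplusXQX, ∃ l : List ZplusXQX, l ≠ [] ∧ (∀ p ∈ l, Irreducible p) ∧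
        (⟨Polynomial.X, 0, by simp⟩ : ZplusXQX) * b = l.prod := by
  set x : ZplusXQX := ⟨Polynomial.X, 0, by simp⟩
  have hx : ZplusXQX.constantCoeff x = 0 := by
    simp [x, ZplusXQX.constantCoeff_apply]
  have no_factorization : ¬ ∃ b : ZplusXQX, ∃ l : List ZplusXQX, l ≠ [] ∧
      (∀ p ∈ l, Irreducible p) ∧ x * b = l.prod := by
    rintro ⟨b, l, -, hl, hxb⟩
    apply ZplusXQX.constantCoeff_prod_ne_zero hl
    rw [← hxb, map_mul, hx, zero_mul]
  have hx_ne : x ≠ 0 := fun h => X_ne_zero (congrArg Subtype.val h)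
  exact ⟨fun h => no_factorization (h x hx_ne (ZplusXQX.not_isUnit_of_constantCoeff_eq_zero hx)),
    no_factorization⟩
end

section
/- D is almost atomic if and only if for every pair of nonzero elements a, b ∈ K there is a weak path connecting a to b, i.e., a finite sequence x₀, x₁, …, xₖ of nonzero elements of K (k ≥ 0) with x₀D = aD and xₖD = bD as fractional ideals, such that for each 1 ≤ i ≤ k either xᵢ₋₁/xᵢ or xᵢ/xᵢ₋₁ is an irreducible element of D. -/
/-- `D` is almost atomic: for every nonzero nonunit `a` there are irreducibles
`π₁, …, πₙ` (`n ≥ 0`) such that `a • π₁⋯πₙ` is a finite product of irreducibles. -/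
def IsAlmostAtomicDomain (D : Type*) [CommRing D] : Prop :=
  ∀ a : D, a ≠ 0 → ¬ IsUnit a →
    ∃ l₁ l₂ : List D, (∀ p ∈ l₁, Irreducible p) ∧ l₂ ≠ [] ∧ (∀ p ∈ l₂, Irreducible p) ∧
      a * l₁.prod = l₂.prod

/-- A weak path connecting `a` to `b` in the graph of divisibility: a finite sequence
`x 0, x 1, …, x k` of nonzero elements of `K` with `x 0 • D = a • D` and
`x k • D = b • D` as fractional ideals, such that each consecutive quotient
`x (i-1) / x i` or `x i / x (i-1)` is an irreducible element of `D`. -/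
def WeakPath (D : Type*) {K : Type*} [CommRing D] [Field K] [Algebra D K]
    (a b : K) : Prop :=
  ∃ (k : ℕ) (x : ℕ → K), (∀ i ≤ k, x i ≠ 0) ∧
    Submodule.span D {x 0} = Submodule.span D {a} ∧
    Submodule.span D {x k} = Submodule.span D {b} ∧
    ∀ i, 1 ≤ i → i ≤ k →
      (∃ π : D, Irreducible π ∧ x (i - 1) / x i = algebraMap D K π) ∨
      (∃ π : D, Irreducible π ∧ x i / x (i - 1) = algebraMap D K π)

/-!
A weak path is a chain of nonzero elements of `K` in which consecutive terms differ by an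
irreducible factor of `D`, read up to units of `D` at its two ends. Collecting the irreducibles
met going up and going down, `a` and `b` are joined by one iff `a * ∏ πᵢ = u * b * ∏ ρⱼ` for
irreducibles `πᵢ, ρⱼ` and a unit `u` of `D`. For `a = r ∈ D` and `b = 1` this is the almost
atomic condition on `r`, once `u` is absorbed into one of the `ρⱼ` (there is one, as `r` is not
a unit). Conversely, almost atomicity joins every nonzero `r ∈ D` to `1`, hence every `r / s ∈ K`
too, since weak paths can be rescaled.
-/

open Relation

theorem Relation.reflTransGen_iff_exists_seq {α : Type*} {r : α → α → Prop} {a b : α} :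
    ReflTransGen r a b ↔
      ∃ (k : ℕ) (x : ℕ → α), x 0 = a ∧ x k = b ∧ ∀ i < k, r (x i) (x (i + 1)) := by
  refine ⟨fun h => ?_, fun ⟨k, x, h0, hk, hx⟩ => ?_⟩
  · induction h with
    | refl => exact ⟨0, fun _ => a, rfl, rfl, by simp⟩
    | @tail b c _ hbc ih =>
      obtain ⟨k, x, h0, hk, hx⟩ := ih
      refine ⟨k + 1, fun i => if i ≤ k then x i else c, by simp [h0], by simp, fun i hi => ?_⟩
      rcases Nat.lt_succ_iff_lt_or_eq.mp hi with hi | rfl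
      · simpa [hi.le, Nat.succ_le_of_lt hi] using hx i hi
      · simpa [hk] using hbc
  · subst h0 hk
    exact (reflTransGen_of_succ_of_le (fun i j => r (x i) (x j))
      (fun i hi => by simpa using hx i hi.2) k.zero_le).lift x fun _ _ => id

theorem exists_prod_eq_units_mul_prod {M : Type*} [CommMonoid M] (u : Mˣ) {l : List M}
    (hl : l ≠ []) (hirr : ∀ p ∈ l, Irreducible p) :
    ∃ l' : List M, l' ≠ [] ∧ (∀ p ∈ l', Irreducible p) ∧ l'.prod = u * l.prod := by
  obtain ⟨p, t, rfl⟩ := List.exists_cons_of_ne_nil hl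
  refine ⟨(u * p) :: t, List.cons_ne_nil _ _, ?_, by simp [mul_assoc]⟩
  simp only [List.mem_cons, forall_eq_or_imp] at hirr ⊢
  exact ⟨irreducible_units_mul u |>.mpr hirr.1, hirr.2⟩

def IrreducibleAdj (D : Type*) {K : Type*} [CommRing D] [Field K] [Algebra D K] (x y : K) :
    Prop :=
  (∃ π : D, Irreducible π ∧ x / y = algebraMap D K π) ∨
    (∃ π : D, Irreducible π ∧ y / x = algebraMap D K π)

namespace IrreducibleAdj

variable {D K : Type*} [CommRing D] [Field K] [Algebra D K] {x y : K}

theorem symm (h : IrreducibleAdj D x y) : IrreducibleAdj D y x := Or.symm h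

theorem ne_zero [IsFractionRing D K] (h : IrreducibleAdj D x y) : x ≠ 0 ∧ y ≠ 0 := by
  have hmap {π : D} (hπ : Irreducible π) : algebraMap D K π ≠ 0 :=
    mt IsFractionRing.to_map_eq_zero_iff.mp hπ.ne_zero
  rcases h with ⟨π, hπ, h⟩ | ⟨π, hπ, h⟩
  · exact div_ne_zero_iff.mp (h ▸ hmap hπ)
  · exact (div_ne_zero_iff.mp (h ▸ hmap hπ)).symm

theorem mul_left (h : IrreducibleAdj D x y) {c : K} (hc : c ≠ 0) :
    IrreducibleAdj D (c * x) (c * y) := by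
  simpa only [IrreducibleAdj, mul_div_mul_left _ _ hc] using h

theorem self_mul {π : D} (hπ : Irreducible π) (hx : x ≠ 0) :
    IrreducibleAdj D x (x * algebraMap D K π) :=
  .inr ⟨π, hπ, mul_div_cancel_left₀ _ hx⟩

theorem units_smul (h : IrreducibleAdj D x y) (u : Dˣ) :
    IrreducibleAdj D (u • x) (u • y) := by
  simpa only [Units.smul_def, Algebra.smul_def] using
    h.mul_left (u.isUnit.map (algebraMap D K)).ne_zero

instance : Std.Symm (IrreducibleAdj D (K := K)) := ⟨fun _ _ => symm⟩

end IrreducibleAdj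

section

variable {D K : Type*} [CommRing D] [Field K] [Algebra D K]

theorem reflTransGen_irreducibleAdj_units_smul {x y : K} (h : ReflTransGen (IrreducibleAdj D) x y)
    (u : Dˣ) : ReflTransGen (IrreducibleAdj D) (u • x) (u • y) :=
  h.lift _ fun _ _ hxy => hxy.units_smul u

theorem reflTransGen_irreducibleAdj_mul_left {x y : K} (h : ReflTransGen (IrreducibleAdj D) x y)
    {c : K} (hc : c ≠ 0) : ReflTransGen (IrreducibleAdj D) (c * x) (c * y) :=
  h.lift _ fun _ _ hxy => hxy.mul_left hc

theorem reflTransGen_irreducibleAdj_mul_prod [IsFractionRing D K] {x : K} (hx : x ≠ 0)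
    {l : List D} (hl : ∀ p ∈ l, Irreducible p) :
    ReflTransGen (IrreducibleAdj D) x (x * algebraMap D K l.prod) := by
  induction l generalizing x with
  | nil => simpa using ReflTransGen.refl
  | cons π t ih =>
    simp only [List.mem_cons, forall_eq_or_imp] at hl
    have hπ := IrreducibleAdj.self_mul (D := D) hl.1 hx
    rw [List.prod_cons, map_mul, ← mul_assoc]
    exact .head hπ (ih hπ.ne_zero.2 hl.2)

theorem exists_mul_prod_eq_mul_prod_of_reflTransGen [IsFractionRing D K] {x y : K}
    (h : ReflTransGen (IrreducibleAdj D) x y) :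
    ∃ l₁ l₂ : List D, (∀ p ∈ l₁, Irreducible p) ∧ (∀ p ∈ l₂, Irreducible p) ∧
      x * algebraMap D K l₁.prod = y * algebraMap D K l₂.prod := by
  induction h with
  | refl => exact ⟨[], [], by simp, by simp, rfl⟩
  | @tail y z _ hyz ih =>
    obtain ⟨l₁, l₂, hl₁, hl₂, heq⟩ := ih
    obtain ⟨hy, hz⟩ := hyz.ne_zero
    rcases hyz with ⟨π, hπ, hq⟩ | ⟨π, hπ, hq⟩
    · rw [div_eq_iff hz] at hq
      refine ⟨l₁, π :: l₂, hl₁, List.forall_mem_cons.mpr ⟨hπ, hl₂⟩, ?_⟩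
      rw [heq, hq, List.prod_cons, map_mul]
      ring
    · rw [div_eq_iff hy] at hq
      refine ⟨π :: l₁, l₂, List.forall_mem_cons.mpr ⟨hπ, hl₁⟩, hl₂, ?_⟩
      rw [hq, List.prod_cons, map_mul, mul_left_comm, heq]
      ring

end

section

variable {D K : Type*} [CommRing D] [IsDomain D] [Field K] [Algebra D K] [IsFractionRing D K]
  {a b c : K}

theorem weakPath_iff : WeakPath D a b ↔
    a ≠ 0 ∧ b ≠ 0 ∧ ∃ u : Dˣ, ReflTransGen (IrreducibleAdj D) a (u • b) := by
  constructor
  · rintro ⟨k, x, hx, h0, hk, hs⟩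
    obtain ⟨v, rfl⟩ := Submodule.span_singleton_eq_span_singleton.mp h0
    obtain ⟨w, rfl⟩ := Submodule.span_singleton_eq_span_singleton.mp hk
    have hchain : ReflTransGen (IrreducibleAdj D) (x 0) (x k) :=
      reflTransGen_iff_exists_seq.mpr
        ⟨k, x, rfl, rfl, fun i hi => by
          have := hs (i + 1) (by omega) hi
          rwa [Nat.add_sub_cancel] at this⟩
    refine ⟨(smul_ne_zero_iff_ne v).mpr (hx 0 k.zero_le),
      (smul_ne_zero_iff_ne w).mpr (hx k le_rfl), v * w⁻¹, ?_⟩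
    simpa [smul_smul] using reflTransGen_irreducibleAdj_units_smul hchain v
  · rintro ⟨ha, -, u, h⟩
    obtain ⟨k, x, h0, hk, hs⟩ := reflTransGen_iff_exists_seq.mp h
    refine ⟨k, x, fun i => ?_, by rw [h0], ?_, fun i hi1 hik => ?_⟩
    · induction i with
      | zero => exact fun _ => h0 ▸ ha
      | succ i _ => exact fun hi => (hs i hi).ne_zero.2
    · exact hk ▸ Submodule.span_singleton_eq_span_singleton.mpr ⟨u⁻¹, inv_smul_smul u b⟩
    · obtain ⟨j, rfl⟩ : ∃ j, i = j + 1 := ⟨i - 1, by omega⟩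
      exact hs j hik

theorem WeakPath.symm (h : WeakPath D a b) : WeakPath D b a := by
  obtain ⟨ha, hb, u, h⟩ := weakPath_iff.mp h
  refine weakPath_iff.mpr ⟨hb, ha, u⁻¹, _root_.symm ?_⟩
  simpa using reflTransGen_irreducibleAdj_units_smul h u⁻¹

theorem WeakPath.trans (hab : WeakPath D a b) (hbc : WeakPath D b c) : WeakPath D a c := by
  obtain ⟨ha, -, u, hab⟩ := weakPath_iff.mp hab
  obtain ⟨-, hc, v, hbc⟩ := weakPath_iff.mp hbc
  refine weakPath_iff.mpr ⟨ha, hc, u * v, hab.trans ?_⟩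
  simpa [smul_smul] using reflTransGen_irreducibleAdj_units_smul hbc u

theorem WeakPath.mul_left (h : WeakPath D a b) (hc : c ≠ 0) : WeakPath D (c * a) (c * b) := by
  obtain ⟨ha, hb, u, h⟩ := weakPath_iff.mp h
  refine weakPath_iff.mpr ⟨mul_ne_zero hc ha, mul_ne_zero hc hb, u, ?_⟩
  simpa [mul_smul_comm] using reflTransGen_irreducibleAdj_mul_left h hc

theorem weakPath_algebraMap_one (H : IsAlmostAtomicDomain D) {r : D} (hr : r ≠ 0) :
    WeakPath D (algebraMap D K r) 1 := by
  have hr' : algebraMap D K r ≠ 0 := mt IsFractionRing.to_map_eq_zero_iff.mp hr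
  refine weakPath_iff.mpr ⟨hr', one_ne_zero, ?_⟩
  by_cases hu : IsUnit r
  · exact ⟨hu.unit, by simpa [Algebra.smul_def] using .refl⟩
  · obtain ⟨l₁, l₂, hl₁, -, hl₂, heq⟩ := H r hr hu
    have h₁ := reflTransGen_irreducibleAdj_mul_prod hr' hl₁
    have h₂ := reflTransGen_irreducibleAdj_mul_prod (one_ne_zero : (1 : K) ≠ 0) hl₂
    rw [← map_mul, heq] at h₁
    rw [one_mul] at h₂
    exact ⟨1, by simpa using h₁.trans (symm h₂)⟩

theorem weakPath_one (H : IsAlmostAtomicDomain D) (ha : a ≠ 0) : WeakPath D a 1 := by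
  obtain ⟨r, s, hs, rfl⟩ := IsFractionRing.div_surjective D a
  have hs' : algebraMap D K s ≠ 0 := IsFractionRing.to_map_ne_zero_of_mem_nonZeroDivisors hs
  have hr : r ≠ 0 := by rintro rfl; simp at ha
  have h := (weakPath_algebraMap_one H (nonZeroDivisors.ne_zero hs)).mul_left ha
  rw [div_mul_cancel₀ _ hs', mul_one] at h
  exact h.symm.trans (weakPath_algebraMap_one H hr)

variable (K) in
theorem isAlmostAtomicDomain_of_weakPath
    (h : ∀ r : D, r ≠ 0 → WeakPath D (algebraMap D K r) 1) : IsAlmostAtomicDomain D := by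
  intro r hr hnu
  obtain ⟨-, -, u, hpath⟩ := weakPath_iff.mp (h r hr)
  obtain ⟨l₁, l₂, hl₁, hl₂, heq⟩ := exists_mul_prod_eq_mul_prod_of_reflTransGen hpath
  have heq : r * l₁.prod = u * l₂.prod :=
    IsFractionRing.injective D K (by simpa [Units.smul_def, Algebra.smul_def] using heq)
  have hne : l₂ ≠ [] := by
    rintro rfl
    exact hnu (isUnit_of_mul_isUnit_left (y := l₁.prod) (by simp [heq]))
  obtain ⟨l, hl, hirr, hprod⟩ := exists_prod_eq_units_mul_prod u hne hl₂
  exact ⟨l₁, l, hl₁, hl, hirr, heq.trans hprod.symm⟩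

end

/-- `D` is almost atomic iff any two nonzero elements of its fraction field `K` are
connected by a weak path in the graph of divisibility. -/
theorem almost_atomic_iff_weakly_connected
    (D K : Type*) [CommRing D] [IsDomain D] [Field K] [Algebra D K] [IsFractionRing D K] :
    IsAlmostAtomicDomain D ↔ ∀ a b : K, a ≠ 0 → b ≠ 0 → WeakPath D a b :=
  ⟨fun H _ _ ha hb => (weakPath_one H ha).trans (weakPath_one H hb).symm,
    fun h => isAlmostAtomicDomain_of_weakPath K fun _ hr =>
      h _ _ (mt IsFractionRing.to_map_eq_zero_iff.mp hr) one_ne_zero⟩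
end
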